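/- Let (X,T) be a TDS and μ a T-invariant ergodic Borel probability measure on X. The following conditions are equivalent: (1) (X,T) is μ-FK-sensitive; (2) (X,T) is μ-FK-expansive; (3) there exists ε > 0 such that μ(B_ε^FK(x)) = 0 for μ-almost every x ∈ X; (4) (X,T) is not μ-FK-continuous. -/

import Mathlib

open Filter Topology MeasureTheory Set

namespace FKPaper

variable {X : Type*} [MetricSpace X]

/-- The maximal fit of an `(n,δ)`-match between the orbits of `x` and `z` under `T`:
the largest cardinality of the domain of an order-preserving bijection
`π : D → R`, with `D, R ⊆ {0,…,n-1}` and `dist (T^[i] x) (T^[π i] z) < δ` for `i ∈ D`. -/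
noncomputable def maxFit (T : X → X) (δ : ℝ) (n : ℕ) (x z : X) : ℕ :=
  sSup {k : ℕ | ∃ i j : Fin k → ℕ, StrictMono i ∧ StrictMono j ∧
    (∀ s, i s < n) ∧ (∀ s, j s < n) ∧ ∀ s, dist (T^[i s] x) (T^[j s] z) < δ}

/-- `f̄_{n,δ}(x,z) = 1 - (maximal fit of an (n,δ)-match of x and z)/n`. -/
noncomputable def fbarN (T : X → X) (δ : ℝ) (n : ℕ) (x z : X) : ℝ :=
  1 - (maxFit T δ n x z : ℝ) / n

/-- `f̄_δ(x,z) = limsup_{n→∞} f̄_{n,δ}(x,z)`. -/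
noncomputable def fbar (T : X → X) (δ : ℝ) (x z : X) : ℝ :=
  Filter.limsup (fun n => fbarN T δ n x z) Filter.atTop

/-- The Feldman–Katok pseudometric `ρ_FK(x,z) = inf {δ > 0 : f̄_δ(x,z) < δ}`. -/
noncomputable def rhoFK (T : X → X) (x z : X) : ℝ :=
  sInf {δ : ℝ | 0 < δ ∧ fbar T δ x z < δ}

/-- `μ`-FK-continuity. -/
def MuFKContinuous [MeasurableSpace X] (T : X → X) (μ : Measure X) : Prop :=
  ∀ τ > 0, ∃ M : Set X, IsCompact M ∧ ENNReal.ofReal (1 - τ) ≤ μ M ∧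
    ∀ ε > 0, ∃ δ > 0, ∀ x ∈ M, ∀ y ∈ M, dist x y ≤ δ → rhoFK T x y ≤ ε

/-- `μ`-FK-sensitivity. -/
def MuFKSensitive [MeasurableSpace X] (T : X → X) (μ : Measure X) : Prop :=
  ∃ ε₀ > 0, ∀ A : Set X, MeasurableSet A → 0 < μ A →
    ∃ x ∈ A, ∃ y ∈ A, ε₀ < rhoFK T x y

/-- `μ`-FK-expansivity. -/
def MuFKExpansive [MeasurableSpace X] (T : X → X) (μ : Measure X) : Prop :=
  ∃ ε₀ > 0, (μ.prod μ) {p : X × X | ε₀ < rhoFK T p.1 p.2} = 1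

end FKPaper

/-!
Since `ρ_FK(T x, T y) ≤ ρ_FK(x, y)`, the function `x ↦ μ(B_ε^FK(x))` is sub-invariant, hence
a.e. constant by ergodicity. If the constant vanishes for some `ε`, every set of positive measure
contains two FK-far points, `μ × μ`-almost every pair is FK-far by Fubini, and no set of positive
measure is uniformly FK-continuous. If it is positive for every `ε`, a maximal `2ε`-separated
family is finite, so finitely many FK-balls of radius `2ε` cover `X` up to a null set. Making
them disjoint and shrinking the pieces to compact sets, which then lie at positive distance from one
another, gives FK-continuity up to `4ε` on a compact set of almost full measure; intersecting over `ε → 0`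
gives `μ`-FK-continuity.
-/

open scoped ENNReal

open Finset in
theorem exists_strictMono_comp_eq_comp {α : Type*} [LinearOrder α] {k₁ k₂ : ℕ}
    {f : Fin k₁ → α} {g : Fin k₂ → α} (hf : StrictMono f) (hg : StrictMono g) :
    ∃ (a : Fin #(Finset.univ.image f ∩ Finset.univ.image g) → Fin k₁)
      (b : Fin #(Finset.univ.image f ∩ Finset.univ.image g) → Fin k₂),
      StrictMono a ∧ StrictMono b ∧ ∀ s, f (a s) = g (b s) := by
  set e := (Finset.univ.image f ∩ Finset.univ.image g).orderEmbOfFin rfl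
  have he : ∀ s, e s ∈ Finset.univ.image f ∩ Finset.univ.image g := fun s => orderEmbOfFin_mem _ _ s
  choose a ha using fun s => Finset.mem_image.1 (Finset.mem_inter.1 (he s)).1
  choose b hb using fun s => Finset.mem_image.1 (Finset.mem_inter.1 (he s)).2
  refine ⟨a, b, fun s t hst => ?_, fun s t hst => ?_, fun s => (ha s).2.trans (hb s).2.symm⟩
  · exact hf.lt_iff_lt.1 (by rw [(ha s).2, (ha t).2]; exact e.strictMono hst)
  · exact hg.lt_iff_lt.1 (by rw [(hb s).2, (hb t).2]; exact e.strictMono hst)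

theorem Filter.limsup_le_limsup_add_limsup {α : Type*} {f : Filter α} [f.NeBot] {u v w : α → ℝ}
    (hu : IsBoundedUnder (· ≥ ·) f u) (hu' : IsBoundedUnder (· ≤ ·) f u)
    (hv : IsBoundedUnder (· ≥ ·) f v) (hv' : IsBoundedUnder (· ≤ ·) f v)
    (hw : IsBoundedUnder (· ≥ ·) f w) (h : w ≤ᶠ[f] u + v) :
    limsup w f ≤ limsup u f + limsup v f :=
  (limsup_le_limsup h hw.isCoboundedUnder_le (isBoundedUnder_le_add hu' hv')).trans
    (limsup_add_le hu hu' hv.isCoboundedUnder_le hv')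

open Finset in
theorem Finset.exists_maximal_of_card_le {α : Type*} [DecidableEq α] {P : Finset α → Prop}
    {N : ℕ} (h₀ : P ∅) (hN : ∀ F, P F → #F ≤ N) : ∃ F, P F ∧ ∀ x ∉ F, ¬ P (insert x F) := by
  classical
  obtain ⟨F, hF, hcard⟩ :=
    Nat.findGreatest_spec (P := fun k => ∃ F, P F ∧ #F = k) (Nat.zero_le N) ⟨∅, h₀, rfl⟩
  refine ⟨F, hF, fun x hx hins => ?_⟩
  have := Nat.le_findGreatest (P := fun k => ∃ F, P F ∧ #F = k) (hN _ hins) ⟨_, hins, rfl⟩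
  rw [Finset.card_insert_of_notMem hx] at this
  omega

theorem Ergodic.ae_eq_const_of_ae_le_comp {α : Type*} [MeasurableSpace α] {μ : Measure α}
    {f : α → α} (hf : Ergodic f μ) {g : α → ℝ≥0∞} (hg : Measurable g)
    (hint : ∫⁻ x, g x ∂μ ≠ ∞) (hle : g ≤ᵐ[μ] g ∘ f) : ∃ c, g =ᵐ[μ] Function.const α c :=
  hf.ae_eq_const_of_ae_eq_comp₀ hg.nullMeasurable <| EventuallyEq.symm <|
    ae_eq_of_ae_le_of_lintegral_le hle hint (hg.comp hf.measurable).aemeasurable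
      (hf.toMeasurePreserving.lintegral_comp hg).le

section Separation

variable {X : Type*} [MetricSpace X]

open Function in
theorem exists_pos_forall_eq_of_dist_le {ι : Type*} [Finite ι] {C : ι → Set X}
    (hC : ∀ i, IsCompact (C i)) (hdisj : Pairwise (Disjoint on C)) :
    ∃ δ > 0, ∀ i j, ∀ x ∈ C i, ∀ y ∈ C j, dist x y ≤ δ → i = j := by
  have h : ∀ p : ι × ι, ∀ᶠ δ in 𝓝[>] (0 : ℝ),
      ∀ x ∈ C p.1, ∀ y ∈ C p.2, dist x y ≤ δ → p.1 = p.2 := by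
    rintro ⟨i, j⟩
    rcases eq_or_ne i j with rfl | hij
    · exact Eventually.of_forall fun _ _ _ _ _ _ => rfl
    obtain ⟨r, hr, hsep⟩ := Metric.exists_pos_forall_lt_edist (hC i) (hC j).isClosed (hdisj hij)
    filter_upwards [Ioo_mem_nhdsGT (show (0 : ℝ) < r from hr)] with δ hδ x hx y hy hxy
    refine absurd (hsep x hx y hy) (not_lt.2 (edist_le_coe.2 ?_))
    rw [← NNReal.coe_le_coe, coe_nndist]
    exact hxy.trans hδ.2.le
  obtain ⟨δ, hδ, hδpos⟩ := ((eventually_all.2 h).and self_mem_nhdsWithin).exists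
  exact ⟨δ, hδpos, fun i j => hδ (i, j)⟩

variable [MeasurableSpace X] [OpensMeasurableSpace X] (μ : Measure X) [IsFiniteMeasure μ]
  [μ.InnerRegularCompactLTTop] {η : ℝ≥0∞}

open Function in
theorem exists_isCompact_forall_dist_le_exists_mem_of_pairwise_disjoint {ι : Type*} [Finite ι]
    {A : ι → Set X} (hA : ∀ i, MeasurableSet (A i)) (hdisj : Pairwise (Disjoint on A))
    (hcover : ∀ᵐ x ∂μ, ∃ i, x ∈ A i) (hη : η ≠ 0) :
    ∃ M, IsCompact M ∧ μ Mᶜ ≤ η ∧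
      ∃ δ > 0, ∀ x ∈ M, ∀ y ∈ M, dist x y ≤ δ → ∃ i, x ∈ A i ∧ y ∈ A i := by
  have := Fintype.ofFinite ι
  obtain ⟨η', hη'pos, hη'sum⟩ := ENNReal.exists_pos_sum_of_countable' hη ι
  choose C hCA hC hCμ using fun i =>
    (hA i).exists_isCompact_sdiff_lt (measure_ne_top μ _) (hη'pos i).ne'
  obtain ⟨δ, hδ, hsep⟩ := exists_pos_forall_eq_of_dist_le hC
    fun i j hij => (hdisj hij).mono (hCA i) (hCA j)
  refine ⟨⋃ i, C i, isCompact_iUnion hC, ?_, δ, hδ, fun x hx y hy hxy => ?_⟩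
  · have hsub : (⋃ i, C i)ᶜ ⊆ {x | ¬ ∃ i, x ∈ A i} ∪ ⋃ i, A i \ C i := by
      intro x hx
      by_cases hA : ∃ i, x ∈ A i
      · obtain ⟨i, hi⟩ := hA
        exact Or.inr (Set.mem_iUnion.2 ⟨i, hi, fun hCi => hx (Set.mem_iUnion.2 ⟨i, hCi⟩)⟩)
      · exact Or.inl hA
    calc μ (⋃ i, C i)ᶜ ≤ μ {x | ¬ ∃ i, x ∈ A i} + μ (⋃ i, A i \ C i) :=
          (measure_mono hsub).trans (measure_union_le _ _)
      _ ≤ 0 + ∑' i, η' i :=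
          add_le_add (ae_iff.1 hcover).le
            ((measure_iUnion_le _).trans (ENNReal.tsum_le_tsum fun i => (hCμ i).le))
      _ ≤ η := by rw [zero_add]; exact hη'sum.le
  · obtain ⟨i, hi⟩ := Set.mem_iUnion.1 hx
    obtain ⟨j, hj⟩ := Set.mem_iUnion.1 hy
    obtain rfl := hsep i j x hi y hj hxy
    exact ⟨i, hCA i hi, hCA i hj⟩

theorem exists_isCompact_forall_dist_le_exists_mem {N : ℕ} {A : Fin N → Set X}
    (hA : ∀ i, MeasurableSet (A i)) (hcover : ∀ᵐ x ∂μ, ∃ i, x ∈ A i) (hη : η ≠ 0) :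
    ∃ M, IsCompact M ∧ μ Mᶜ ≤ η ∧
      ∃ δ > 0, ∀ x ∈ M, ∀ y ∈ M, dist x y ≤ δ → ∃ i, x ∈ A i ∧ y ∈ A i := by
  obtain ⟨M, hM, hMμ, δ, hδ, hMδ⟩ := exists_isCompact_forall_dist_le_exists_mem_of_pairwise_disjoint
    μ (fun i => disjointedRec (fun _ j ht => ht.diff (hA j)) (hA i)) (disjoint_disjointed A)
    (hcover.mono fun x hx => by simpa only [← Set.mem_iUnion, iUnion_disjointed] using hx) hη
  refine ⟨M, hM, hMμ, δ, hδ, fun x hx y hy hxy => ?_⟩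
  obtain ⟨i, hxi, hyi⟩ := hMδ x hx y hy hxy
  exact ⟨i, disjointed_subset A i hxi, disjointed_subset A i hyi⟩

end Separation

namespace FKPaper

variable {X : Type*} [MetricSpace X] {T : X → X}

section Matches

variable {δ δ₁ δ₂ : ℝ} {n k : ℕ} {x y z : X}

def matchSizes (T : X → X) (δ : ℝ) (n : ℕ) (x z : X) : Set ℕ :=
  {k : ℕ | ∃ i j : Fin k → ℕ, StrictMono i ∧ StrictMono j ∧
    (∀ s, i s < n) ∧ (∀ s, j s < n) ∧ ∀ s, dist (T^[i s] x) (T^[j s] z) < δ}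

theorem maxFit_eq_sSup : maxFit T δ n x z = sSup (matchSizes T δ n x z) := rfl

theorem zero_mem_matchSizes : 0 ∈ matchSizes T δ n x z :=
  ⟨Fin.elim0, Fin.elim0, fun a => a.elim0, fun a => a.elim0,
    fun a => a.elim0, fun a => a.elim0, fun a => a.elim0⟩

theorem le_of_mem_matchSizes (h : k ∈ matchSizes T δ n x z) : k ≤ n := by
  obtain ⟨i, -, hi, -, hin, -⟩ := h
  simpa using Fintype.card_le_of_injective (fun s => (⟨i s, hin s⟩ : Fin n))
    fun s t hst => hi.injective (Fin.val_eq_of_eq hst)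

theorem bddAbove_matchSizes : BddAbove (matchSizes T δ n x z) :=
  ⟨n, fun _ => le_of_mem_matchSizes⟩

theorem maxFit_mem_matchSizes : maxFit T δ n x z ∈ matchSizes T δ n x z :=
  Nat.sSup_mem ⟨0, zero_mem_matchSizes⟩ bddAbove_matchSizes

theorem le_maxFit (h : k ∈ matchSizes T δ n x z) : k ≤ maxFit T δ n x z :=
  le_csSup bddAbove_matchSizes h

theorem maxFit_le : maxFit T δ n x z ≤ n :=
  le_of_mem_matchSizes maxFit_mem_matchSizes

theorem mem_matchSizes_of_le (h : k ∈ matchSizes T δ n x z) {m : ℕ} (hm : m ≤ k) :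
    m ∈ matchSizes T δ n x z := by
  obtain ⟨i, j, hi, hj, hin, hjn, hd⟩ := h
  exact ⟨i ∘ Fin.castLE hm, j ∘ Fin.castLE hm, hi.comp (Fin.strictMono_castLE hm),
    hj.comp (Fin.strictMono_castLE hm), fun _ => hin _, fun _ => hjn _, fun _ => hd _⟩

theorem mem_matchSizes_iff_le_maxFit : k ∈ matchSizes T δ n x z ↔ k ≤ maxFit T δ n x z :=
  ⟨le_maxFit, mem_matchSizes_of_le maxFit_mem_matchSizes⟩

theorem matchSizes_comm : matchSizes T δ n x z = matchSizes T δ n z x := by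
  ext k
  constructor <;> rintro ⟨i, j, hi, hj, hin, hjn, hd⟩ <;>
    exact ⟨j, i, hj, hi, hjn, hin, fun s => dist_comm (T^[i s] _) (T^[j s] _) ▸ hd s⟩

theorem maxFit_comm : maxFit T δ n x z = maxFit T δ n z x := by
  rw [maxFit_eq_sSup, maxFit_eq_sSup, matchSizes_comm]

theorem maxFit_mono (hδ : δ₁ ≤ δ₂) {m : ℕ} (hn : n ≤ m) :
    maxFit T δ₁ n x z ≤ maxFit T δ₂ m x z := by
  obtain ⟨i, j, hi, hj, hin, hjn, hd⟩ := maxFit_mem_matchSizes (T := T) (δ := δ₁) (n := n)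
    (x := x) (z := z)
  exact le_maxFit ⟨i, j, hi, hj, fun s => (hin s).trans_le hn, fun s => (hjn s).trans_le hn,
    fun s => (hd s).trans_le hδ⟩

theorem maxFit_self (hδ : 0 < δ) : maxFit T δ n x x = n :=
  maxFit_le.antisymm <| le_maxFit ⟨Fin.val, Fin.val, Fin.val_strictMono, Fin.val_strictMono,
    Fin.isLt, Fin.isLt, fun s => by simpa using hδ⟩

open Finset in
/-- Matches compose along the positions of `y`'s orbit used by both of them. -/
theorem maxFit_add_maxFit_le :
    maxFit T δ₁ n x y + maxFit T δ₂ n y z ≤ maxFit T (δ₁ + δ₂) n x z + n := by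
  classical
  obtain ⟨i₁, j₁, hi₁, hj₁, hi₁n, hj₁n, hd₁⟩ := maxFit_mem_matchSizes (T := T) (δ := δ₁)
    (n := n) (x := x) (z := y)
  obtain ⟨i₂, j₂, hi₂, hj₂, hi₂n, hj₂n, hd₂⟩ := maxFit_mem_matchSizes (T := T) (δ := δ₂)
    (n := n) (x := y) (z := z)
  obtain ⟨a, b, ha, hb, hab⟩ := exists_strictMono_comp_eq_comp hj₁ hi₂
  have hcard : maxFit T δ₁ n x y + maxFit T δ₂ n y z
      ≤ #(Finset.univ.image j₁ ∩ Finset.univ.image i₂) + n := by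
    have hunion : #(Finset.univ.image j₁ ∪ Finset.univ.image i₂) ≤ n := by
      simpa using card_le_card (s := Finset.univ.image j₁ ∪ Finset.univ.image i₂) (t := range n)
        (by simp [Finset.union_subset_iff, Finset.image_subset_iff, hj₁n, hi₂n])
    have h := card_union_add_card_inter (Finset.univ.image j₁) (Finset.univ.image i₂)
    rw [card_image_of_injective _ hj₁.injective, card_image_of_injective _ hi₂.injective,
      card_univ, card_univ, Fintype.card_fin, Fintype.card_fin] at h
    omega
  have hmem : #(Finset.univ.image j₁ ∩ Finset.univ.image i₂) ∈ matchSizes T (δ₁ + δ₂) n x z :=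
    ⟨i₁ ∘ a, j₂ ∘ b, hi₁.comp ha, hj₂.comp hb, fun _ => hi₁n _, fun _ => hj₂n _, fun s =>
      (dist_triangle _ (T^[j₁ (a s)] y) _).trans_lt <|
        add_lt_add (hd₁ (a s)) (by rw [hab]; exact hd₂ (b s))⟩
  have := le_maxFit hmem
  omega

theorem mem_matchSizes_apply_of_succ_mem (h : k + 1 ∈ matchSizes T δ (n + 1) x y) :
    k ∈ matchSizes T δ n (T x) (T y) := by
  obtain ⟨i, j, hi, hj, hin, hjn, hd⟩ := h
  have hi₀ : ∀ s : Fin k, i s.succ - 1 + 1 = i s.succ := fun s => by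
    have := hi (Fin.succ_pos s); omega
  have hj₀ : ∀ s : Fin k, j s.succ - 1 + 1 = j s.succ := fun s => by
    have := hj (Fin.succ_pos s); omega
  refine ⟨fun s => i s.succ - 1, fun s => j s.succ - 1, fun s t hst => ?_, fun s t hst => ?_,
    fun s => ?_, fun s => ?_, fun s => ?_⟩ <;> dsimp only
  · have := hi (Fin.succ_lt_succ_iff.2 hst); have := hi₀ s; have := hi₀ t; omega
  · have := hj (Fin.succ_lt_succ_iff.2 hst); have := hj₀ s; have := hj₀ t; omega
  · have := hin s.succ; have := hi₀ s; omega
  · have := hjn s.succ; have := hj₀ s; omega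
  · simpa only [← Function.iterate_succ_apply, Nat.succ_eq_add_one, hi₀, hj₀] using hd s.succ

theorem maxFit_le_maxFit_apply_add_one : maxFit T δ n x y ≤ maxFit T δ n (T x) (T y) + 1 := by
  have hmono := maxFit_mono (T := T) (x := x) (z := y) (le_refl δ) (Nat.le_add_right n 1)
  rcases Nat.eq_zero_or_pos (maxFit T δ (n + 1) x y) with hzero | hpos
  · omega
  · have := le_maxFit <| mem_matchSizes_apply_of_succ_mem <|
      mem_matchSizes_of_le maxFit_mem_matchSizes (Nat.sub_add_cancel hpos).le
    omega

end Matches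

section Pseudometric

variable {δ δ₁ δ₂ a : ℝ} {n : ℕ} {x y z : X}

theorem fbarN_nonneg : 0 ≤ fbarN T δ n x z :=
  sub_nonneg.2 (div_le_one_of_le₀ (by exact_mod_cast maxFit_le) (Nat.cast_nonneg n))

theorem fbarN_le_one : fbarN T δ n x z ≤ 1 :=
  sub_le_self _ (by positivity)

theorem fbarN_anti (hδ : δ₁ ≤ δ₂) : fbarN T δ₂ n x z ≤ fbarN T δ₁ n x z := by
  unfold fbarN
  gcongr
  exact maxFit_mono hδ le_rfl

theorem fbarN_comm : fbarN T δ n x z = fbarN T δ n z x := by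
  rw [fbarN, fbarN, maxFit_comm]

theorem fbarN_self (hδ : 0 < δ) (hn : n ≠ 0) : fbarN T δ n x x = 0 := by
  rw [fbarN, maxFit_self hδ, div_self (Nat.cast_ne_zero.2 hn), sub_self]

theorem fbarN_triangle : fbarN T (δ₁ + δ₂) n x z ≤ fbarN T δ₁ n x y + fbarN T δ₂ n y z := by
  rcases Nat.eq_zero_or_pos n with rfl | hn
  · norm_num [fbarN]
  have key : (maxFit T δ₁ n x y + maxFit T δ₂ n y z : ℝ) ≤ maxFit T (δ₁ + δ₂) n x z + n := by
    exact_mod_cast maxFit_add_maxFit_le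
  have := div_le_div_of_nonneg_right key (Nat.cast_nonneg n)
  rw [add_div, add_div, div_self (Nat.cast_ne_zero.2 hn.ne')] at this
  simp only [fbarN]
  linarith

theorem fbarN_apply_le : fbarN T δ n (T x) (T y) ≤ fbarN T δ n x y + 1 / n := by
  have key : (maxFit T δ n x y : ℝ) ≤ maxFit T δ n (T x) (T y) + 1 := by
    exact_mod_cast maxFit_le_maxFit_apply_add_one
  have := div_le_div_of_nonneg_right key (Nat.cast_nonneg n)
  rw [add_div] at this
  simp only [fbarN]
  linarith

theorem isBoundedUnder_ge_fbarN :
    IsBoundedUnder (· ≥ ·) atTop fun n => fbarN T δ n x z :=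
  isBoundedUnder_of ⟨0, fun _ => fbarN_nonneg⟩

theorem isBoundedUnder_le_fbarN :
    IsBoundedUnder (· ≤ ·) atTop fun n => fbarN T δ n x z :=
  isBoundedUnder_of ⟨1, fun _ => fbarN_le_one⟩

theorem fbar_le_one : fbar T δ x z ≤ 1 :=
  limsup_le_of_le isBoundedUnder_ge_fbarN.isCoboundedUnder_le
    (Eventually.of_forall fun _ => fbarN_le_one)

theorem fbar_anti (hδ : δ₁ ≤ δ₂) : fbar T δ₂ x z ≤ fbar T δ₁ x z :=
  limsup_le_limsup (Eventually.of_forall fun _ => fbarN_anti hδ)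
    isBoundedUnder_ge_fbarN.isCoboundedUnder_le isBoundedUnder_le_fbarN

theorem fbar_comm : fbar T δ x z = fbar T δ z x := by
  simp only [fbar, fbarN_comm (x := x)]

theorem fbar_self (hδ : 0 < δ) : fbar T δ x x = 0 := by
  rw [fbar, limsup_congr (eventually_ne_atTop 0 |>.mono fun _ hn => fbarN_self hδ hn),
    limsup_const]

theorem fbar_triangle : fbar T (δ₁ + δ₂) x z ≤ fbar T δ₁ x y + fbar T δ₂ y z :=
  Filter.limsup_le_limsup_add_limsup isBoundedUnder_ge_fbarN isBoundedUnder_le_fbarN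
    isBoundedUnder_ge_fbarN isBoundedUnder_le_fbarN isBoundedUnder_ge_fbarN
    (Eventually.of_forall fun _ => fbarN_triangle)

theorem fbar_apply_le : fbar T δ (T x) (T y) ≤ fbar T δ x y := by
  have hinv : Tendsto (fun n : ℕ => 1 / (n : ℝ)) atTop (𝓝 0) := tendsto_one_div_atTop_nhds_zero_nat
  have := Filter.limsup_le_limsup_add_limsup isBoundedUnder_ge_fbarN isBoundedUnder_le_fbarN
    hinv.isBoundedUnder_ge hinv.isBoundedUnder_le isBoundedUnder_ge_fbarN
    (Eventually.of_forall fun _ => fbarN_apply_le (T := T) (δ := δ) (x := x) (y := y))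
  rwa [hinv.limsup_eq, add_zero] at this

theorem rhoFK_nonneg : 0 ≤ rhoFK T x z :=
  le_csInf ⟨2, two_pos, fbar_le_one.trans_lt one_lt_two⟩ fun _ h => h.1.le

theorem rhoFK_le (hδ : 0 < δ) (h : fbar T δ x z < δ) : rhoFK T x z ≤ δ :=
  csInf_le ⟨0, fun _ h => h.1.le⟩ ⟨hδ, h⟩

theorem exists_fbar_lt_of_rhoFK_lt (h : rhoFK T x z < a) :
    ∃ δ < a, 0 < δ ∧ fbar T δ x z < δ := by
  obtain ⟨δ, hδ, hδa⟩ := exists_lt_of_csInf_lt (s := {δ | 0 < δ ∧ fbar T δ x z < δ})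
    ⟨2, two_pos, fbar_le_one.trans_lt one_lt_two⟩ h
  exact ⟨δ, hδa, hδ⟩

theorem rhoFK_lt_iff : rhoFK T x z < a ↔ ∃ q : ℚ, 0 < (q : ℝ) ∧ q < a ∧ fbar T q x z < q := by
  refine ⟨fun h => ?_, fun ⟨q, hq, hqa, hfbar⟩ => (rhoFK_le hq hfbar).trans_lt hqa⟩
  obtain ⟨δ, hδa, hδ, hfbar⟩ := exists_fbar_lt_of_rhoFK_lt h
  obtain ⟨q, hδq, hqa⟩ := exists_rat_btwn hδa
  exact ⟨q, hδ.trans hδq, hqa, (fbar_anti hδq.le).trans_lt (hfbar.trans hδq)⟩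

theorem rhoFK_comm : rhoFK T x z = rhoFK T z x := by
  simp only [rhoFK, fbar_comm (x := x)]

theorem rhoFK_self : rhoFK T x x = 0 :=
  (le_of_forall_gt_imp_ge_of_dense fun _ hδ => rhoFK_le hδ (by rwa [fbar_self hδ])).antisymm
    rhoFK_nonneg

theorem rhoFK_triangle : rhoFK T x z ≤ rhoFK T x y + rhoFK T y z := by
  refine le_of_forall_gt_imp_ge_of_dense fun c hc => ?_
  have hr : 0 < (c - (rhoFK T x y + rhoFK T y z)) / 2 := half_pos (sub_pos.2 hc)
  obtain ⟨δ₁, hδ₁c, hδ₁, h₁⟩ :=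
    exists_fbar_lt_of_rhoFK_lt (T := T) (x := x) (z := y) (lt_add_of_pos_right _ hr)
  obtain ⟨δ₂, hδ₂c, hδ₂, h₂⟩ :=
    exists_fbar_lt_of_rhoFK_lt (T := T) (x := y) (z := z) (lt_add_of_pos_right _ hr)
  calc rhoFK T x z ≤ δ₁ + δ₂ :=
        rhoFK_le (add_pos hδ₁ hδ₂) (fbar_triangle.trans_lt (add_lt_add h₁ h₂))
    _ ≤ c := by linarith

theorem rhoFK_apply_le : rhoFK T (T x) (T y) ≤ rhoFK T x y := by
  refine le_of_forall_gt_imp_ge_of_dense fun c hc => ?_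
  obtain ⟨δ, hδc, hδ, h⟩ := exists_fbar_lt_of_rhoFK_lt hc
  exact (rhoFK_le hδ (fbar_apply_le.trans_lt h)).trans hδc.le

end Pseudometric

section Balls

variable {ε δ : ℝ} {n k : ℕ} {x y a : X}

def fkClosedBall (T : X → X) (x : X) (ε : ℝ) : Set X := {y | rhoFK T x y ≤ ε}

theorem mem_fkClosedBall : y ∈ fkClosedBall T x ε ↔ rhoFK T x y ≤ ε := Iff.rfl

theorem rhoFK_le_of_mem_fkClosedBall (hx : x ∈ fkClosedBall T a ε)
    (hy : y ∈ fkClosedBall T a ε) : rhoFK T x y ≤ 2 * ε := by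
  have htri := rhoFK_triangle (T := T) (x := x) (y := a) (z := y)
  rw [rhoFK_comm (x := x) (z := a)] at htri
  rw [mem_fkClosedBall] at hx hy
  linarith

theorem fkClosedBall_subset_preimage : fkClosedBall T x ε ⊆ T ⁻¹' fkClosedBall T (T x) ε :=
  fun _ hy => rhoFK_apply_le.trans hy

theorem isOpen_setOf_mem_matchSizes (hT : Continuous T) :
    IsOpen {p : X × X | k ∈ matchSizes T δ n p.1 p.2} := by
  have : {p : X × X | k ∈ matchSizes T δ n p.1 p.2} = ⋃ (i : Fin k → ℕ) (j : Fin k → ℕ),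
      {_p | StrictMono i ∧ StrictMono j ∧ (∀ s, i s < n) ∧ ∀ s, j s < n} ∩
        ⋂ s, {p | dist (T^[i s] p.1) (T^[j s] p.2) < δ} := by
    ext
    simp [matchSizes, and_assoc]
  rw [this]
  exact isOpen_iUnion fun i => isOpen_iUnion fun j => isOpen_const.inter <|
    isOpen_iInter_of_finite fun s => isOpen_lt (by fun_prop) continuous_const

section Measure

variable [MeasurableSpace X] (μ : Measure X)

theorem measure_eq_zero_of_forall_rhoFK_le (hae : ∀ᵐ x ∂μ, μ (fkClosedBall T x ε) = 0)
    {A : Set X} (hA : ∀ x ∈ A, ∀ y ∈ A, rhoFK T x y ≤ ε) : μ A = 0 := by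
  by_contra hA₀
  obtain ⟨x, hx, hx₀⟩ : ∃ x ∈ A, μ (fkClosedBall T x ε) = 0 := by
    by_contra! hne
    exact hA₀ (measure_mono_null hne (ae_iff.1 hae))
  exact hA₀ (measure_mono_null (hA x hx) hx₀)

theorem not_muFKContinuous [SecondCountableTopology X] (hε : 0 < ε)
    (hae : ∀ᵐ x ∂μ, μ (fkClosedBall T x ε) = 0) : ¬ MuFKContinuous T μ := by
  intro hcont
  obtain ⟨M, -, hμM, hM⟩ := hcont (1 / 2) one_half_pos
  obtain ⟨δ, hδ, hMδ⟩ := hM ε hε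
  have hM₀ : μ M ≠ 0 := (lt_of_lt_of_le (by norm_num) hμM).ne'
  obtain ⟨x, -, hx⟩ := exists_mem_forall_mem_nhdsWithin_pos_measure hM₀
  refine (hx (M ∩ Metric.ball x (δ / 2))
    (inter_mem_nhdsWithin _ (Metric.ball_mem_nhds x (half_pos hδ)))).ne' ?_
  refine measure_eq_zero_of_forall_rhoFK_le μ hae fun y hy z hz => hMδ y hy.1 z hz.1 ?_
  linarith [dist_triangle_right y z x, Metric.mem_ball.1 hy.2, Metric.mem_ball.1 hz.2]

variable [BorelSpace X] [SecondCountableTopology X]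

theorem measurable_maxFit (hT : Continuous T) :
    Measurable fun p : X × X => maxFit T δ n p.1 p.2 := by
  refine measurable_to_countable' fun m => ?_
  have : (fun p : X × X => maxFit T δ n p.1 p.2) ⁻¹' {m}
      = {p | m ∈ matchSizes T δ n p.1 p.2} \ {p | m + 1 ∈ matchSizes T δ n p.1 p.2} := by
    ext p
    simp only [Set.mem_preimage, Set.mem_singleton_iff, Set.mem_sdiff, Set.mem_ofPred_eq,
      mem_matchSizes_iff_le_maxFit]
    omega
  rw [this]
  exact (isOpen_setOf_mem_matchSizes hT).measurableSet.diff
    (isOpen_setOf_mem_matchSizes hT).measurableSet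

theorem measurable_fbar (hT : Continuous T) : Measurable fun p : X × X => fbar T δ p.1 p.2 :=
  Measurable.limsup fun _ =>
    measurable_const.sub ((measurable_from_top.comp (measurable_maxFit hT)).div_const _)

theorem measurable_rhoFK (hT : Continuous T) : Measurable fun p : X × X => rhoFK T p.1 p.2 := by
  refine measurable_of_Iio fun a => ?_
  have : (fun p : X × X => rhoFK T p.1 p.2) ⁻¹' Set.Iio a
      = ⋃ q : ℚ, {_p | 0 < (q : ℝ) ∧ (q : ℝ) < a} ∩ {p | fbar T q p.1 p.2 < q} := by
    ext p
    simp only [Set.mem_preimage, Set.mem_Iio, rhoFK_lt_iff, Set.mem_iUnion, Set.mem_inter_iff,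
      Set.mem_ofPred_eq, and_assoc]
  rw [this]
  exact .iUnion fun q => (MeasurableSet.const _).inter
    (measurableSet_lt (measurable_fbar hT) measurable_const)

theorem measurableSet_setOf_rhoFK_le (hT : Continuous T) :
    MeasurableSet {p : X × X | rhoFK T p.1 p.2 ≤ ε} :=
  measurable_rhoFK hT measurableSet_Iic

theorem measurableSet_fkClosedBall (hT : Continuous T) : MeasurableSet (fkClosedBall T x ε) :=
  measurable_prodMk_left (measurableSet_setOf_rhoFK_le hT)

theorem muFKSensitive_iff (hT : Continuous T) :
    MuFKSensitive T μ ↔ ∃ ε > 0, ∀ᵐ x ∂μ, μ (fkClosedBall T x ε) = 0 := by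
  refine ⟨fun ⟨ε₀, hε₀, hsens⟩ => ⟨ε₀ / 2, half_pos hε₀, ?_⟩, fun ⟨ε, hε, hae⟩ =>
    ⟨ε, hε, fun A _ hA => ?_⟩⟩
  · by_contra hae
    obtain ⟨a, ha⟩ := (not_eventually.1 hae).exists
    obtain ⟨x, hx, y, hy, hxy⟩ :=
      hsens _ (measurableSet_fkClosedBall hT) (pos_iff_ne_zero.2 ha)
    linarith [rhoFK_le_of_mem_fkClosedBall hx hy]
  · by_contra! hsmall
    exact hA.ne' (measure_eq_zero_of_forall_rhoFK_le μ hae hsmall)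

theorem muFKExpansive_iff (hT : Continuous T) [IsProbabilityMeasure μ] :
    MuFKExpansive T μ ↔ ∃ ε > 0, ∀ᵐ x ∂μ, μ (fkClosedBall T x ε) = 0 := by
  refine exists_congr fun ε => and_congr_right fun _ => ?_
  have hcompl : {p : X × X | ε < rhoFK T p.1 p.2} = {p | rhoFK T p.1 p.2 ≤ ε}ᶜ := by
    ext; simp
  rw [hcompl, prob_compl_eq_one_iff (measurableSet_setOf_rhoFK_le hT),
    Measure.measure_prod_null (measurableSet_setOf_rhoFK_le hT)]
  rfl

theorem ae_eq_const_measure_fkClosedBall [IsFiniteMeasure μ] (hT : Continuous T)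
    (hμ : Ergodic T μ) : ∃ c, ∀ᵐ x ∂μ, μ (fkClosedBall T x ε) = c := by
  have hmeas : Measurable fun x => μ (fkClosedBall T x ε) :=
    measurable_measure_prodMk_left (measurableSet_setOf_rhoFK_le hT)
  have hint : ∫⁻ x, μ (fkClosedBall T x ε) ∂μ ≠ ∞ :=
    ne_top_of_le_ne_top (by simp [lintegral_const, ENNReal.mul_ne_top])
      (lintegral_mono fun x => measure_mono (Set.subset_univ (fkClosedBall T x ε)))
  have hle : ∀ x, μ (fkClosedBall T x ε) ≤ μ (fkClosedBall T (T x) ε) := fun x =>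
    (measure_mono fkClosedBall_subset_preimage).trans_eq
      (hμ.toMeasurePreserving.measure_preimage (measurableSet_fkClosedBall hT).nullMeasurableSet)
  exact hμ.ae_eq_const_of_ae_le_comp hmeas hint (Eventually.of_forall hle)

theorem card_mul_le_measure_univ (hT : Continuous T) {c : ℝ≥0∞} {F : Finset X}
    (hF : ∀ a ∈ F, c ≤ μ (fkClosedBall T a ε))
    (hsep : (F : Set X).Pairwise fun a b => 2 * ε < rhoFK T a b) :
    F.card * c ≤ μ Set.univ := by
  have hdisj : (F : Set X).PairwiseDisjoint fun a => fkClosedBall T a ε :=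
    fun a ha b hb hab => Set.disjoint_left.2 fun y hya hyb => by
      have := rhoFK_triangle (T := T) (x := a) (y := y) (z := b)
      rw [rhoFK_comm (x := y) (z := b)] at this
      linarith [hsep ha hb hab, mem_fkClosedBall.1 hya, mem_fkClosedBall.1 hyb]
  calc F.card * c = ∑ _a ∈ F, c := by rw [Finset.sum_const, nsmul_eq_mul]
    _ ≤ ∑ a ∈ F, μ (fkClosedBall T a ε) := Finset.sum_le_sum hF
    _ = μ (⋃ a ∈ F, fkClosedBall T a ε) :=
        (measure_biUnion_finset hdisj fun _ _ => measurableSet_fkClosedBall hT).symm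
    _ ≤ μ Set.univ := measure_mono (Set.subset_univ _)

/-- Take a maximal `2ε`-separated family among the points whose `ε`-ball has measure at least `c`:
its `ε`-balls are disjoint, so it has at most `μ univ / c` members. -/
theorem exists_finset_ae_mem_fkClosedBall [IsFiniteMeasure μ] (hT : Continuous T) (hε : 0 ≤ ε)
    {c : ℝ≥0∞} (hc : c ≠ 0) (hae : ∀ᵐ x ∂μ, c ≤ μ (fkClosedBall T x ε)) :
    ∃ F : Finset X, ∀ᵐ x ∂μ, ∃ a ∈ F, x ∈ fkClosedBall T a (2 * ε) := by
  classical
  obtain ⟨N, hN⟩ := ENNReal.exists_nat_gt (ENNReal.div_ne_top (measure_ne_top μ Set.univ) hc)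
  obtain ⟨F, ⟨hFG, hFsep⟩, hFmax⟩ := Finset.exists_maximal_of_card_le
    (P := fun F : Finset X => (∀ a ∈ F, c ≤ μ (fkClosedBall T a ε)) ∧
      (F : Set X).Pairwise fun a b => 2 * ε < rhoFK T a b) (N := N)
    ⟨by simp, by simp⟩ fun F ⟨hFG, hFsep⟩ => by
      have := (ENNReal.le_div_iff_mul_le (.inl hc) (.inr (measure_ne_top μ _))).2
        (card_mul_le_measure_univ μ hT hFG hFsep)
      exact_mod_cast (this.trans_lt hN).le
  refine ⟨F, hae.mono fun x hx => ?_⟩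
  by_contra! hfar
  have hxF : x ∉ F := fun hxF =>
    hfar x hxF (by rw [mem_fkClosedBall, rhoFK_self]; positivity)
  refine hFmax x hxF ⟨fun a ha => ?_, ?_⟩
  · rcases Finset.mem_insert.1 ha with rfl | ha
    exacts [hx, hFG a ha]
  · refine Finset.coe_insert x F ▸ Set.pairwise_insert.2 ⟨hFsep, fun b hb _ => ?_⟩
    have hbx : 2 * ε < rhoFK T b x := not_le.1 (hfar b hb)
    exact ⟨rhoFK_comm (T := T) ▸ hbx, hbx⟩

end Measure

section Continuity

variable [MeasurableSpace X] [BorelSpace X] (μ : Measure X)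

theorem exists_isCompact_forall_dist_le_rhoFK_le [CompactSpace X] [IsFiniteMeasure μ]
    (hT : Continuous T) (hμ : Ergodic T μ) (hε : 0 ≤ ε)
    (hne : ¬ ∀ᵐ x ∂μ, μ (fkClosedBall T x ε) = 0) {η : ℝ≥0∞} (hη : η ≠ 0) :
    ∃ M, IsCompact M ∧ μ Mᶜ ≤ η ∧
      ∃ δ > 0, ∀ x ∈ M, ∀ y ∈ M, dist x y ≤ δ → rhoFK T x y ≤ 4 * ε := by
  obtain ⟨c, hc⟩ := ae_eq_const_measure_fkClosedBall (ε := ε) μ hT hμ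
  have hc₀ : c ≠ 0 := by
    rintro rfl
    exact hne hc
  obtain ⟨F, hF⟩ := exists_finset_ae_mem_fkClosedBall μ hT hε hc₀ (hc.mono fun _ hx => hx.ge)
  obtain ⟨M, hM, hMμ, δ, hδ, hMδ⟩ := exists_isCompact_forall_dist_le_exists_mem μ
    (A := fun i => fkClosedBall T (F.equivFin.symm i) (2 * ε))
    (fun _ => measurableSet_fkClosedBall hT)
    (hF.mono fun x ⟨a, ha, hxa⟩ => ⟨F.equivFin ⟨a, ha⟩, by simpa using hxa⟩) hη
  refine ⟨M, hM, hMμ, δ, hδ, fun x hx y hy hxy => ?_⟩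
  obtain ⟨i, hxi, hyi⟩ := hMδ x hx y hy hxy
  linarith [rhoFK_le_of_mem_fkClosedBall hxi hyi]

theorem muFKContinuous_of_forall_exists_isCompact [IsProbabilityMeasure μ]
    (h : ∀ ε > 0, ∀ η ≠ (0 : ℝ≥0∞), ∃ M, IsCompact M ∧ μ Mᶜ ≤ η ∧
      ∃ δ > 0, ∀ x ∈ M, ∀ y ∈ M, dist x y ≤ δ → rhoFK T x y ≤ ε) :
    MuFKContinuous T μ := by
  intro τ hτ
  obtain ⟨η, hηpos, hηsum⟩ :=
    ENNReal.exists_pos_sum_of_countable' (ENNReal.ofReal_pos.2 hτ).ne' ℕ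
  choose M hM hMμ hMδ using fun k : ℕ => h (1 / (k + 1)) Nat.one_div_pos_of_nat (η k) (hηpos k).ne'
  have hMc : IsCompact (⋂ k, M k) :=
    (hM 0).of_isClosed_subset (isClosed_iInter fun k => (hM k).isClosed) (Set.iInter_subset M 0)
  have hMcompl : μ (⋂ k, M k)ᶜ ≤ ENNReal.ofReal τ := by
    rw [Set.compl_iInter]
    exact (measure_iUnion_le _).trans ((ENNReal.tsum_le_tsum hMμ).trans hηsum.le)
  refine ⟨⋂ k, M k, hMc, ?_, fun ε hε => ?_⟩
  · rw [ENNReal.ofReal_sub _ hτ.le, ENNReal.ofReal_one, tsub_le_iff_right,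
      ← prob_add_prob_compl (μ := μ) hMc.isClosed.measurableSet]
    exact add_le_add_right hMcompl _
  · obtain ⟨k, hk⟩ := exists_nat_one_div_lt hε
    obtain ⟨δ, hδ, hMkδ⟩ := hMδ k
    exact ⟨δ, hδ, fun x hx y hy hxy => (hMkδ x (Set.mem_iInter.1 hx k) y
      (Set.mem_iInter.1 hy k) hxy).trans hk.le⟩

theorem not_muFKContinuous_iff [CompactSpace X] [IsProbabilityMeasure μ] (hT : Continuous T)
    (hμ : Ergodic T μ) :
    ¬ MuFKContinuous T μ ↔ ∃ ε > 0, ∀ᵐ x ∂μ, μ (fkClosedBall T x ε) = 0 := by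
  refine ⟨fun hcont => not_not.1 fun hne => hcont ?_,
    fun ⟨_, hε, hae⟩ => not_muFKContinuous μ hε hae⟩
  refine muFKContinuous_of_forall_exists_isCompact μ fun ε hε η hη => ?_
  have := exists_isCompact_forall_dist_le_rhoFK_le μ hT hμ (by positivity : 0 ≤ ε / 4)
    (fun hae => hne ⟨ε / 4, by positivity, hae⟩) hη
  rwa [mul_div_cancel₀ _ four_ne_zero] at this

end Continuity

end Balls

end FKPaper

open FKPaper Filter Topology MeasureTheory Set

theorem muFKSensitive_tfae_general {X : Type*} [MetricSpace X] [CompactSpace X]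
    (T : X → X) (hT : Continuous T) [MeasurableSpace X] [BorelSpace X]
    (μ : Measure X) [IsProbabilityMeasure μ] (hμ : Ergodic T μ) :
    List.TFAE
      [MuFKSensitive T μ,
       MuFKExpansive T μ,
       ∃ ε > (0 : ℝ), ∀ᵐ x ∂μ, μ {y : X | rhoFK T x y ≤ ε} = 0,
       ¬ MuFKContinuous T μ] := by
  tfae_have 1 ↔ 3 := muFKSensitive_iff μ hT
  tfae_have 2 ↔ 3 := muFKExpansive_iff μ hT
  tfae_have 4 ↔ 3 := not_muFKContinuous_iff μ hT hμ
  tfae_finish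

/-- equivalence of `μ`-FK-sensitivity, `μ`-FK-expansivity,
a.e. null FK-balls, and failure of `μ`-FK-continuity. -/
theorem muFKSensitive_tfae {X : Type*} [MetricSpace X] [CompactSpace X] [Nonempty X]
    (T : X → X) (hT : Continuous T) [MeasurableSpace X] [BorelSpace X]
    (μ : Measure X) [IsProbabilityMeasure μ] (hμ : Ergodic T μ) :
    List.TFAE
      [MuFKSensitive T μ,
       MuFKExpansive T μ,
       ∃ ε > (0 : ℝ), ∀ᵐ x ∂μ, μ {y : X | rhoFK T x y ≤ ε} = 0,
       ¬ MuFKContinuous T μ] :=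
  muFKSensitive_tfae_general T hT μ hμ
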